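/- arXiv:2602.01987 — 6 statements merged into one kernel-verified Lean document; each statement's English description precedes it below -/
import Mathlib

section
/- Let A : Fin s → Fin r → ℕ be a normalizer matrix. Then there exist p : ℕ, size functions s', r' : Fin p → ℕ, bijections e : Fin s ≃ (Σ k : Fin p, Fin (s' k)) and g : Fin r ≃ (Σ k : Fin p, Fin (r' k)), and a function c : (Σ k : Fin p, Fin (s' k)) → ℕ with c x > 0 for all x, such that for all i : Fin s and j : Fin r one has A i j = c (e i) if the first (block) components of e i and g j coincide, and A i j = 0 otherwise. In other words, every normalizer matrix is pseudo-equivalent to a block-diagonal matrix in which every off-diagonal block is zero and every row of each diagonal block consists of equal nonzero entries. -/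
/-- The support of the `i`-th row of a matrix `A : Fin s → Fin r → ℕ`. -/
def rowSupport {s r : ℕ} (A : Fin s → Fin r → ℕ) (i : Fin s) : Set (Fin r) :=
  {j : Fin r | A i j ≠ 0}

/-- A matrix is irredundant if no row and no column is identically zero. -/
def Irredundant {s r : ℕ} (A : Fin s → Fin r → ℕ) : Prop :=
  (∀ i : Fin s, ∃ j : Fin r, A i j ≠ 0) ∧ (∀ j : Fin r, ∃ i : Fin s, A i j ≠ 0)

/-- A matrix is a normalizer matrix if it is irredundant, in every row all
nonzero entries are equal, and any two row supports are equal or disjoint. -/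
def IsNormalizerMatrix {s r : ℕ} (A : Fin s → Fin r → ℕ) : Prop :=
  Irredundant A ∧
  (∀ i : Fin s, ∀ j k : Fin r, A i j ≠ 0 → A i k ≠ 0 → A i j = A i k) ∧
  (∀ i k : Fin s, rowSupport A i = rowSupport A k ∨
      rowSupport A i ∩ rowSupport A k = ∅)

/-!
Label row `i` by its support and column `j` by the support of any row that is nonzero at `j`
(one exists since `A` has no zero column). Because row supports are equal or disjoint,
`A i j ≠ 0` exactly when the two labels agree. Grouping rows and columns by label, with all sets
of columns enumerated as labels, gives the blocks (those of unused labels are empty), and `c`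
records the common nonzero value of each row.
-/

open Function

noncomputable def sigmaFinFiberEquiv {α β : Type*} [Fintype α] [DecidableEq β] (f : α → β) :
    α ≃ Σ b : β, Fin (Fintype.card {a // f a = b}) :=
  (Equiv.sigmaFiberEquiv f).symm.trans (Equiv.sigmaCongrRight fun _ => Fintype.equivFin _)

@[simp]
theorem sigmaFinFiberEquiv_fst {α β : Type*} [Fintype α] [DecidableEq β] (f : α → β) (a : α) :
    (sigmaFinFiberEquiv f a).1 = f a :=
  rfl

section Matrix

variable {ι κ M : Type*} [Zero M] {A : ι → κ → M}

theorem exists_columnLabel_ne_zero_iff (hcol : ∀ j, ∃ i, A i j ≠ 0)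
    (hsupp : ∀ i k, support (A i) = support (A k) ∨ support (A i) ∩ support (A k) = ∅) :
    ∃ label : κ → Set κ, ∀ i j, A i j ≠ 0 ↔ support (A i) = label j := by
  choose ρ hρ using hcol
  refine ⟨fun j => support (A (ρ j)), fun i j => ⟨fun hij => ?_, fun h => ?_⟩⟩
  · refine (hsupp i (ρ j)).resolve_right fun hdisj => ?_
    exact (Set.eq_empty_iff_forall_notMem.mp hdisj) j ⟨hij, hρ j⟩
  · exact (h ▸ hρ j : j ∈ support (A i))

theorem eq_ite_of_ne_zero_iff {β : Type*} [DecidableEq β] {f : ι → β} {g : κ → β} {v : ι → M}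
    (hiff : ∀ i j, A i j ≠ 0 ↔ f i = g j) (hv : ∀ i j, A i j ≠ 0 → A i j = v i) (i : ι) (j : κ) :
    A i j = if f i = g j then v i else 0 := by
  split_ifs with h
  · exact hv i j ((hiff i j).mpr h)
  · exact not_not.mp (mt (hiff i j).mp h)

end Matrix

/-- every normalizer matrix is pseudo-equivalent to a
block-diagonal matrix whose off-diagonal blocks vanish and each of whose
diagonal blocks has all the entries of every row equal and nonzero. -/
theorem normalizerMatrix_blockDiagonal {s r : ℕ}
    (A : Fin s → Fin r → ℕ) (hA : IsNormalizerMatrix A) :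
    ∃ (p : ℕ) (s' r' : Fin p → ℕ)
      (e : Fin s ≃ (Σ k : Fin p, Fin (s' k)))
      (g : Fin r ≃ (Σ k : Fin p, Fin (r' k)))
      (c : (Σ k : Fin p, Fin (s' k)) → ℕ),
      (∀ x, 0 < c x) ∧
      (∀ (i : Fin s) (j : Fin r),
        A i j = if (e i).1 = (g j).1 then c (e i) else 0) := by
  obtain ⟨⟨hrow, hcol⟩, hconst, hsupp⟩ := hA
  obtain ⟨label, hlabel⟩ := exists_columnLabel_ne_zero_iff hcol hsupp
  choose jrow hjrow using hrow
  let q := Fintype.equivFin (Set (Fin r))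
  let f i := q (support (A i))
  let g j := q (label j)
  have hfg : ∀ i j, A i j ≠ 0 ↔ f i = g j := fun i j => (hlabel i j).trans q.apply_eq_iff_eq.symm
  let e := sigmaFinFiberEquiv f
  refine ⟨_, _, _, e, sigmaFinFiberEquiv g, fun x => A (e.symm x) (jrow (e.symm x)),
    fun x => Nat.pos_of_ne_zero (hjrow _), fun i j => ?_⟩
  simpa only [e, sigmaFinFiberEquiv_fst, Equiv.symm_apply_apply] using
    eq_ite_of_ne_zero_iff hfg (fun i j hij => hconst i j (jrow i) hij (hjrow i)) i j
end

section
/- Let n, r ≥ 1 and let f : Fin n → Fin r be a surjective function. Let B_f ⊆ Matrix (Fin n) (Fin n) ℂ be the unital subalgebra consisting of all matrices of the form Matrix.diagonal (c ∘ f) with c : Fin r → ℂ (this realizes the inclusion ℂ^r ⊆ M_n(ℂ), with inclusion matrix entries a_j = |f⁻¹(j)|). If the inclusion B_f ⊆ M_n(ℂ) is regular, i.e. the ℂ-linear span of the set N := {U ∈ Matrix (Fin n) (Fin n) ℂ : U is unitary and U B_f Uᴴ = B_f} is all of Matrix (Fin n) (Fin n) ℂ, then all fibers of f have the same cardinality: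 for all j, k : Fin r, |f⁻¹({j})| = |f⁻¹({k})|. Equivalently, all entries of the inclusion matrix of ℂ^r ⊆ M_n(ℂ) are equal. -/
open Matrix

/-- The subalgebra `ℂ^r ⊆ M_n(ℂ)` determined by `f : Fin n → Fin r`,
consisting of all diagonal matrices `diagonal (c ∘ f)`. -/
def Bf (n r : ℕ) (f : Fin n → Fin r) : Set (Matrix (Fin n) (Fin n) ℂ) :=
  {M | ∃ c : Fin r → ℂ, M = Matrix.diagonal (c ∘ f)}

/-- The normalizer of a subset `B` of `M_n(ℂ)`: unitaries `U` with `U B Uᴴ = B`. -/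
def matrixNormalizer (n : ℕ) (B : Set (Matrix (Fin n) (Fin n) ℂ)) :
    Set (Matrix (Fin n) (Fin n) ℂ) :=
  {U | U ∈ unitary (Matrix (Fin n) (Fin n) ℂ) ∧ (fun M => U * M * Uᴴ) '' B = B}

/-!
A unitary `U` normalizing `B_f` conjugates the minimal projection `P_k` of `B_f` (the diagonal
indicator of the fiber over `k`) to a projection `diagonal (c ∘ f)` of `B_f`, so `c` is
`{0, 1}`-valued; likewise `Uᴴ P_j U = diagonal (d ∘ f)`. Cyclicity of the trace gives
`|f⁻¹(j)| c_j = |f⁻¹(k)| d_k`, so if the two fibers have different sizes then `c_j = 0`, whence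
`P_j U P_k = P_j (U P_k Uᴴ) U = 0`. Thus `M ↦ P_j M P_k` vanishes on the normalizer, hence on its
span; but it does not vanish on the matrix unit `E_{xy}` with `f x = j`, `f y = k`.
-/

section FiberProj

variable {ι κ R : Type*} [Fintype ι] [DecidableEq ι] [DecidableEq κ] [Semiring R]

def fiberProj (f : ι → κ) (m : κ) : Matrix ι ι R :=
  diagonal fun x => if f x = m then 1 else 0

theorem fiberProj_mul_diagonal_comp (f : ι → κ) (m : κ) (c : κ → R) :
    fiberProj f m * diagonal (c ∘ f) = c m • fiberProj f m := by
  rw [fiberProj, diagonal_mul_diagonal, ← diagonal_smul]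
  congr 1
  ext x
  split_ifs with h <;> simp [h]

theorem isIdempotentElem_fiberProj (f : ι → κ) (m : κ) :
    IsIdempotentElem (fiberProj f m : Matrix ι ι R) := by
  change fiberProj f m * diagonal ((fun i => if i = m then 1 else 0) ∘ f) = _
  rw [fiberProj_mul_diagonal_comp, if_pos rfl, one_smul]

theorem trace_fiberProj (f : ι → κ) (m : κ) :
    trace (fiberProj f m : Matrix ι ι R) = (Finset.univ.filter fun x => f x = m).card := by
  simp [fiberProj, trace_diagonal]

theorem fiberProj_mul_mul_fiberProj_apply (f : ι → κ) (M : Matrix ι ι R) (x y : ι) :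
    (fiberProj f (f x) * M * fiberProj f (f y) : Matrix ι ι R) x y = M x y := by
  simp [fiberProj]

end FiberProj

theorem card_fiber_mul_eq_of_conj_fiberProj {ι κ R : Type*} [Fintype ι] [DecidableEq ι]
    [DecidableEq κ] [CommSemiring R] (f : ι → κ) {U V : Matrix ι ι R} {j k : κ} {c d : κ → R}
    (hc : U * fiberProj f k * V = diagonal (c ∘ f))
    (hd : V * fiberProj f j * U = diagonal (d ∘ f)) :
    ((Finset.univ.filter fun x => f x = j).card : R) * c j =
      (Finset.univ.filter fun x => f x = k).card * d k :=
  calc _ = trace (fiberProj f j * (U * fiberProj f k * V)) := by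
        rw [hc, fiberProj_mul_diagonal_comp, trace_smul, trace_fiberProj, smul_eq_mul, mul_comm]
    _ = trace (fiberProj f k * (V * fiberProj f j * U)) := by
        simp only [Matrix.mul_assoc]
        rw [trace_mul_cycle', Matrix.mul_assoc]
    _ = _ := by
        rw [hd, fiberProj_mul_diagonal_comp, trace_smul, trace_fiberProj, smul_eq_mul, mul_comm]

theorem isIdempotentElem_diagonal_iff {ι R : Type*} [Fintype ι] [DecidableEq ι]
    [NonUnitalNonAssocSemiring R] {d : ι → R} : IsIdempotentElem (diagonal d) ↔ ∀ i, IsIdempotentElem (d i) := by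
  simp only [IsIdempotentElem, diagonal_mul_diagonal, diagonal_injective.eq_iff, funext_iff]

section Normalizer

variable {n r : ℕ}

theorem fiberProj_mem_Bf (f : Fin n → Fin r) (m : Fin r) : fiberProj f m ∈ Bf n r f :=
  ⟨fun i => if i = m then 1 else 0, rfl⟩

theorem exists_eq_diagonal_of_isIdempotentElem {f : Fin n → Fin r} (hf : f.Surjective)
    {p : Matrix (Fin n) (Fin n) ℂ} (hpB : p ∈ Bf n r f) (hp : IsIdempotentElem p) :
    ∃ c : Fin r → ℂ, (∀ i, c i = 0 ∨ c i = 1) ∧ p = diagonal (c ∘ f) := by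
  obtain ⟨c, rfl⟩ := hpB
  refine ⟨c, fun i => ?_, rfl⟩
  obtain ⟨x, rfl⟩ := hf i
  exact IsIdempotentElem.iff_eq_zero_or_one.mp (isIdempotentElem_diagonal_iff.mp hp x)

theorem conjTranspose_mem_matrixNormalizer {B : Set (Matrix (Fin n) (Fin n) ℂ)}
    {U : Matrix (Fin n) (Fin n) ℂ} (hU : U ∈ matrixNormalizer n B) :
    Uᴴ ∈ matrixNormalizer n B := by
  obtain ⟨hUu, hUB⟩ := hU
  refine ⟨Unitary.star_mem hUu, ?_⟩
  have hcancel : ∀ M, Uᴴ * (U * M * Uᴴ) * Uᴴᴴ = M := fun M => by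
    rw [conjTranspose_conjTranspose, ← star_eq_conjTranspose]
    simp only [← Matrix.mul_assoc, Unitary.star_mul_self_of_mem hUu, one_mul]
    rw [Matrix.mul_assoc, Unitary.star_mul_self_of_mem hUu, mul_one]
  conv_lhs => rw [← hUB, Set.image_image]
  simp only [hcancel, Set.image_id']

theorem exists_conj_fiberProj_eq_diagonal {f : Fin n → Fin r} (hf : f.Surjective)
    {U : Matrix (Fin n) (Fin n) ℂ} (hU : U ∈ matrixNormalizer n (Bf n r f)) (m : Fin r) :
    ∃ c : Fin r → ℂ, (∀ i, c i = 0 ∨ c i = 1) ∧ U * fiberProj f m * Uᴴ = diagonal (c ∘ f) := by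
  refine exists_eq_diagonal_of_isIdempotentElem hf ?_ ?_
  · exact hU.2 ▸ Set.mem_image_of_mem _ (fiberProj_mem_Bf f m)
  · simpa [star_eq_conjTranspose] using
      (isIdempotentElem_fiberProj f m).map (Unitary.conjStarAlgAut ℂ _ ⟨U, hU.1⟩)

theorem fiberProj_mul_mul_fiberProj_eq_zero {f : Fin n → Fin r} (hf : f.Surjective)
    {U : Matrix (Fin n) (Fin n) ℂ} (hU : U ∈ matrixNormalizer n (Bf n r f)) {j k : Fin r}
    (hjk : (Finset.univ.filter fun x => f x = j).card ≠
      (Finset.univ.filter fun x => f x = k).card) :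
    fiberProj f j * U * fiberProj f k = 0 := by
  obtain ⟨c, hc01, hc⟩ := exists_conj_fiberProj_eq_diagonal hf hU k
  obtain ⟨d, hd01, hd⟩ :=
    exists_conj_fiberProj_eq_diagonal hf (conjTranspose_mem_matrixNormalizer hU) j
  rw [conjTranspose_conjTranspose] at hd
  have htrace := card_fiber_mul_eq_of_conj_fiberProj f hc hd
  have hpos : (Finset.univ.filter fun x => f x = j).card ≠ 0 := by
    obtain ⟨x, hx⟩ := hf j
    exact Finset.card_ne_zero.mpr ⟨x, by simp [hx]⟩
  have hcj : c j = 0 := by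
    rcases hc01 j with h | h
    · exact h
    rw [h, mul_one] at htrace
    rcases hd01 k with h' | h'
    · rw [h', mul_zero, Nat.cast_eq_zero] at htrace
      exact absurd htrace hpos
    · rw [h', mul_one, Nat.cast_inj] at htrace
      exact absurd htrace hjk
  calc fiberProj f j * U * fiberProj f k = fiberProj f j * (U * fiberProj f k * Uᴴ) * U := by
        simp only [Matrix.mul_assoc, ← star_eq_conjTranspose, Unitary.star_mul_self_of_mem hU.1,
          mul_one]
    _ = 0 := by rw [hc, fiberProj_mul_diagonal_comp, hcj, zero_smul, zero_mul]

end Normalizer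

theorem fibers_card_eq_of_regular_general (n r : ℕ)
    (f : Fin n → Fin r) (hf : Function.Surjective f)
    (hreg : Submodule.span ℂ (matrixNormalizer n (Bf n r f)) = ⊤) :
    ∀ j k : Fin r,
      (Finset.univ.filter fun x => f x = j).card =
      (Finset.univ.filter fun x => f x = k).card := by
  intro j k
  by_contra hjk
  obtain ⟨x, rfl⟩ := hf j
  obtain ⟨y, rfl⟩ := hf k
  let compress : Matrix (Fin n) (Fin n) ℂ →ₗ[ℂ] Matrix (Fin n) (Fin n) ℂ :=
    (LinearMap.mulRight ℂ (fiberProj f (f y))).comp (LinearMap.mulLeft ℂ (fiberProj f (f x)))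
  have hcompress : compress = 0 :=
    LinearMap.ext_on hreg fun U hU => fiberProj_mul_mul_fiberProj_eq_zero hf hU hjk
  have hxy := congr_fun₂ (LinearMap.congr_fun hcompress (single x y 1)) x y
  simp [compress, fiberProj_mul_mul_fiberProj_apply] at hxy

/-- if the inclusion `B_f ⊆ M_n(ℂ)` is regular then all fibers of
`f` have the same cardinality, i.e. all entries of the inclusion matrix of
`ℂ^r ⊆ M_n(ℂ)` are equal. -/
theorem fibers_card_eq_of_regular (n r : ℕ) (hn : 1 ≤ n) (hr : 1 ≤ r)
    (f : Fin n → Fin r) (hf : Function.Surjective f)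
    (hreg : Submodule.span ℂ (matrixNormalizer n (Bf n r f)) = ⊤) :
    ∀ j k : Fin r,
      (Finset.univ.filter fun x => f x = j).card =
      (Finset.univ.filter fun x => f x = k).card :=
  fibers_card_eq_of_regular_general n r f hf hreg
end

section
/- Let r, n₀, n₁ ≥ 1 and let f₀ : Fin n₀ → Fin r and f₁ : Fin n₁ → Fin r be functions such that every j : Fin r lies in range f₀ ∪ range f₁. Let B ⊆ Matrix (Fin n₀) (Fin n₀) ℂ × Matrix (Fin n₁) (Fin n₁) ℂ be the unital subalgebra of all pairs (Matrix.diagonal (c ∘ f₀), Matrix.diagonal (c ∘ f₁)) with c : Fin r → ℂ (this realizes a copy of ℂ^r inside M_{n₀}(ℂ) ⊕ M_{n₁}(ℂ)). If the inclusion B ⊆ M_{n₀}(ℂ) × M_{n₁}(ℂ) is regular, then the ranges of f₀ and f₁ are either equal or disjoint: Set.range f₀ = Set.range f₁ or Set.range f₀ ∩ Set.range f₁ = ∅. -/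
/-!
Conjugation by a unitary `u` normalizing `B` also preserves the ideal `M_{n₀}(ℂ) × 0`, hence the
subalgebra `B ∩ (M_{n₀}(ℂ) × 0)` and therefore its unit `q`, which is the image of the indicator of
the complement of `range f₁`. So `u` commutes with `q`, and the `(a, b)` entry of `u.1` vanishes
whenever `f₀ a ∉ range f₁` but `f₀ b ∈ range f₁`. If the ranges were neither equal nor disjoint,
such `a, b` would exist (possibly after swapping the two factors), and the span of the normalizer
would miss the matrix unit at `(a, b)`.
-/

open Matrix

section Conjugation

variable {A : Type*} [Monoid A] [StarMul A] {u : A}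

theorem commute_of_conj_image_eq (hu : u ∈ unitary A) {S : Set A}
    (hS : (fun x => u * x * star u) '' S = S) {e : A} (he : e ∈ S)
    (hleft : ∀ x ∈ S, e * x = x) (hright : ∀ x ∈ S, x * e = x) : Commute u e := by
  have hconj : u * e * star u ∈ S := hS ▸ Set.mem_image_of_mem _ he
  obtain ⟨x, hx, hxe⟩ : e ∈ (fun x => u * x * star u) '' S := hS.symm ▸ he
  dsimp only at hxe
  have key : u * e * star u = e := calc
    u * e * star u = u * e * star u * e := (hright _ hconj).symm
    _ = u * (e * (star u * u) * x) * star u := by rw [← hxe]; simp only [mul_assoc]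
    _ = e := by rw [Unitary.star_mul_self_of_mem hu, mul_one, hleft x hx, hxe]
  calc u * e = u * e * star u * u := by rw [mul_assoc, Unitary.star_mul_self_of_mem hu, mul_one]
    _ = e * u := by rw [key]

theorem conj_image_inter_ker_eq {C : Type*} [MonoidWithZero C] (φ : A →* C)
    (hu : u ∈ unitary A) {S : Set A} (hS : (fun x => u * x * star u) '' S = S) :
    (fun x => u * x * star u) '' (S ∩ {x | φ x = 0}) = S ∩ {x | φ x = 0} := by
  ext y
  constructor
  · rintro ⟨x, ⟨hxS, hx : φ x = 0⟩, rfl⟩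
    exact ⟨hS ▸ Set.mem_image_of_mem _ hxS, by simp [hx]⟩
  · rintro ⟨hyS, hy : φ _ = 0⟩
    obtain ⟨x, hxS, rfl⟩ : y ∈ (fun x => u * x * star u) '' S := hS.symm ▸ hyS
    refine ⟨x, ⟨hxS, ?_⟩, rfl⟩
    have hx : x = star u * (u * x * star u) * u := by
      simp only [← mul_assoc, Unitary.star_mul_self_of_mem hu, one_mul]
      rw [mul_assoc, Unitary.star_mul_self_of_mem hu, mul_one]
    show φ x = 0
    rw [hx, map_mul, map_mul, hy, mul_zero, zero_mul]

end Conjugation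

namespace Matrix

variable {n R : Type*} [DecidableEq n]

theorem apply_eq_zero_of_commute_diagonal [Fintype n] [CommRing R] [IsDomain R] {M : Matrix n n R}
    {d : n → R} (h : Commute M (diagonal d)) {a b : n} (hab : d a ≠ d b) : M a b = 0 := by
  have := congrFun (congrFun h.eq a) b
  rw [mul_diagonal, diagonal_mul] at this
  have : (d a - d b) * M a b = 0 := by linear_combination -this
  exact (mul_eq_zero.mp this).resolve_left (sub_ne_zero.mpr hab)

theorem diagonal_comp_eq_zero_iff [Zero R] {κ : Type*} {c : κ → R} {f : n → κ} :
    diagonal (c ∘ f) = 0 ↔ ∀ j ∈ Set.range f, c j = 0 := by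
  simp [diagonal_eq_zero, funext_iff]

end Matrix

section DiagonalPair

variable {ι₀ ι₁ κ R : Type*} [Fintype ι₀] [Fintype ι₁] [DecidableEq ι₀] [DecidableEq ι₁]
  {f₀ : ι₀ → κ} {f₁ : ι₁ → κ}

def diagonalPair [Zero R] (f₀ : ι₀ → κ) (f₁ : ι₁ → κ) (c : κ → R) :
    Matrix ι₀ ι₀ R × Matrix ι₁ ι₁ R :=
  (diagonal (c ∘ f₀), diagonal (c ∘ f₁))

theorem diagonalPair_mul [Semiring R] (c c' : κ → R) :
    diagonalPair f₀ f₁ c * diagonalPair f₀ f₁ c' = diagonalPair f₀ f₁ (c * c') := by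
  simp only [diagonalPair, Prod.mk_mul_mk, diagonal_mul_diagonal]
  rfl

theorem range_diagonalPair_inter_ker_eq [Semiring R] {ι : Type*} [Fintype ι] [DecidableEq ι]
    (π : Matrix ι₀ ι₀ R × Matrix ι₁ ι₁ R →* Matrix ι ι R) {g : ι → κ}
    (hπ : ∀ c, π (diagonalPair f₀ f₁ c) = diagonal (c ∘ g)) :
    Set.range (diagonalPair f₀ f₁) ∩ {x | π x = 0} =
      diagonalPair f₀ f₁ '' {c | ∀ j ∈ Set.range g, c j = 0} := by
  ext x
  constructor
  · rintro ⟨⟨c, rfl⟩, hc : π _ = 0⟩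
    exact ⟨c, diagonal_comp_eq_zero_iff.mp (hπ c ▸ hc), rfl⟩
  · rintro ⟨c, hc, rfl⟩
    exact ⟨⟨c, rfl⟩, (hπ c).trans (diagonal_comp_eq_zero_iff.mpr hc)⟩

theorem diagonalPair_indicator_compl_mul [Semiring R] {s : Set κ} :
    ∀ x ∈ diagonalPair f₀ f₁ '' {c : κ → R | ∀ j ∈ s, c j = 0},
      diagonalPair f₀ f₁ (sᶜ.indicator 1) * x = x := by
  rintro _ ⟨c, hc, rfl⟩
  rw [diagonalPair_mul]
  congr 1; ext j; by_cases hj : j ∈ s <;> simp [hj, hc j]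

theorem mul_diagonalPair_indicator_compl [Semiring R] {s : Set κ} :
    ∀ x ∈ diagonalPair f₀ f₁ '' {c : κ → R | ∀ j ∈ s, c j = 0},
      x * diagonalPair f₀ f₁ (sᶜ.indicator 1) = x := by
  rintro _ ⟨c, hc, rfl⟩
  rw [diagonalPair_mul]
  congr 1; ext j; by_cases hj : j ∈ s <;> simp [hj, hc j]

theorem commute_diagonalPair_indicator_compl_range [Semiring R] [StarRing R]
    {ι : Type*} [Fintype ι] [DecidableEq ι]
    (π : Matrix ι₀ ι₀ R × Matrix ι₁ ι₁ R →* Matrix ι ι R) {g : ι → κ}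
    (hπ : ∀ c, π (diagonalPair f₀ f₁ c) = diagonal (c ∘ g))
    {u : Matrix ι₀ ι₀ R × Matrix ι₁ ι₁ R} (hu : u ∈ unitary _)
    (hB : (fun x => u * x * star u) '' Set.range (diagonalPair f₀ f₁) =
      Set.range (diagonalPair f₀ f₁)) :
    Commute u (diagonalPair f₀ f₁ ((Set.range g)ᶜ.indicator 1)) := by
  refine commute_of_conj_image_eq hu (S := diagonalPair f₀ f₁ '' {c | ∀ j ∈ Set.range g, c j = 0})
    ?_ ⟨_, fun j hj => by simp [hj], rfl⟩ diagonalPair_indicator_compl_mul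
    mul_diagonalPair_indicator_compl
  rw [← range_diagonalPair_inter_ker_eq π hπ]
  exact conj_image_inter_ker_eq π hu hB

variable [CommRing R] [IsDomain R] [StarRing R] {u : Matrix ι₀ ι₀ R × Matrix ι₁ ι₁ R}

theorem fst_apply_eq_zero_of_normalizes (hu : u ∈ unitary _)
    (hB : (fun x => u * x * star u) '' Set.range (diagonalPair f₀ f₁) =
      Set.range (diagonalPair f₀ f₁))
    {a b : ι₀} (ha : f₀ a ∉ Set.range f₁) (hb : f₀ b ∈ Set.range f₁) : u.1 a b = 0 :=
  apply_eq_zero_of_commute_diagonal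
    ((commute_diagonalPair_indicator_compl_range (MonoidHom.snd _ _) (fun _ => rfl) hu hB).map
      (MonoidHom.fst _ _)) (by simp [ha, hb])

theorem snd_apply_eq_zero_of_normalizes (hu : u ∈ unitary _)
    (hB : (fun x => u * x * star u) '' Set.range (diagonalPair f₀ f₁) =
      Set.range (diagonalPair f₀ f₁))
    {a b : ι₁} (ha : f₁ a ∉ Set.range f₀) (hb : f₁ b ∈ Set.range f₀) : u.2 a b = 0 :=
  apply_eq_zero_of_commute_diagonal
    ((commute_diagonalPair_indicator_compl_range (MonoidHom.fst _ _) (fun _ => rfl) hu hB).map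
      (MonoidHom.snd _ _)) (by simp [ha, hb])

end DiagonalPair

theorem ranges_eq_or_disjoint_of_regular_general (r n₀ n₁ : ℕ)
    (f₀ : Fin n₀ → Fin r) (f₁ : Fin n₁ → Fin r)
    (B : Set (Matrix (Fin n₀) (Fin n₀) ℂ × Matrix (Fin n₁) (Fin n₁) ℂ))
    (hB : B = {x | ∃ c : Fin r → ℂ,
      x = (Matrix.diagonal (c ∘ f₀), Matrix.diagonal (c ∘ f₁))})
    (hreg : Submodule.span ℂ
      {u : Matrix (Fin n₀) (Fin n₀) ℂ × Matrix (Fin n₁) (Fin n₁) ℂ |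
        u ∈ unitary (Matrix (Fin n₀) (Fin n₀) ℂ × Matrix (Fin n₁) (Fin n₁) ℂ) ∧
        (fun x => u * x * star u) '' B = B} = ⊤) :
    Set.range f₀ = Set.range f₁ ∨ Set.range f₀ ∩ Set.range f₁ = ∅ := by
  obtain rfl : B = Set.range (diagonalPair f₀ f₁) := by
    rw [hB]; ext; simp [diagonalPair, eq_comm]
  by_contra! h
  obtain ⟨hne, p, hp₀, hp₁⟩ := h
  rcases Set.symmDiff_nonempty.mpr hne with ⟨k, ⟨⟨a, rfl⟩, hk⟩ | ⟨⟨a, rfl⟩, hk⟩⟩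
  · obtain ⟨b, rfl⟩ := hp₀
    have h := LinearMap.ext_on hreg (f := entryLinearMap ℂ ℂ a b ∘ₗ LinearMap.fst ℂ _ _) (g := 0)
      fun u hu => fst_apply_eq_zero_of_normalizes hu.1 hu.2 hk hp₁
    simpa using LinearMap.congr_fun h (single a b 1, 0)
  · obtain ⟨b, rfl⟩ := hp₁
    have h := LinearMap.ext_on hreg (f := entryLinearMap ℂ ℂ a b ∘ₗ LinearMap.snd ℂ _ _) (g := 0)
      fun u hu => snd_apply_eq_zero_of_normalizes hu.1 hu.2 hk hp₀
    simpa using LinearMap.congr_fun h (0, single a b 1)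

/-- for the diagonal copy of `ℂ^r` inside
`M_{n₀}(ℂ) ⊕ M_{n₁}(ℂ)` determined by `f₀, f₁`, regularity forces the two row
supports (the ranges of `f₀` and `f₁`) to be equal or disjoint. -/
theorem ranges_eq_or_disjoint_of_regular (r n₀ n₁ : ℕ)
    (hr : 1 ≤ r) (hn₀ : 1 ≤ n₀) (hn₁ : 1 ≤ n₁)
    (f₀ : Fin n₀ → Fin r) (f₁ : Fin n₁ → Fin r)
    (hcover : ∀ j : Fin r, j ∈ Set.range f₀ ∪ Set.range f₁)
    (B : Set (Matrix (Fin n₀) (Fin n₀) ℂ × Matrix (Fin n₁) (Fin n₁) ℂ))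
    (hB : B = {x | ∃ c : Fin r → ℂ,
      x = (Matrix.diagonal (c ∘ f₀), Matrix.diagonal (c ∘ f₁))})
    (hreg : Submodule.span ℂ
      {u : Matrix (Fin n₀) (Fin n₀) ℂ × Matrix (Fin n₁) (Fin n₁) ℂ |
        u ∈ unitary (Matrix (Fin n₀) (Fin n₀) ℂ × Matrix (Fin n₁) (Fin n₁) ℂ) ∧
        (fun x => u * x * star u) '' B = B} = ⊤) :
    Set.range f₀ = Set.range f₁ ∨ Set.range f₀ ∩ Set.range f₁ = ∅ :=
  ranges_eq_or_disjoint_of_regular_general r n₀ n₁ f₀ f₁ B hB hreg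
end

section
/- Let s, r ≥ 1, n : Fin s → ℕ with n i ≥ 1 for all i, and let f : (i : Fin s) → Fin (n i) → Fin r be a family of functions such that every j : Fin r lies in the range of some f i. Let A := Π i : Fin s, Matrix (Fin (n i)) (Fin (n i)) ℂ with pointwise star-algebra structure, and let B ⊆ A be the unital subalgebra of all elements of the form (fun i => Matrix.diagonal (c ∘ f i)) with c : Fin r → ℂ (this realizes the commutative inclusion ℂ^r ⊆ ⊕_i M_{n i}(ℂ), whose inclusion matrix has entries a i j = |(f i)⁻¹({j})|). Then the inclusion B ⊆ A is regular if and only if both of the following hold: (1) for every i : Fin s and all j, k in the range of f i, the fibers (f i)⁻¹({j}) and (f i)⁻¹({k}) have the same cardinality (all nonzero entries in each row of the inclusion matrix are equal); and (2) for all i, i' : Fin s, the ranges of f i and f i' are either equal or disjoint (the row supports of the inclusion matrix are equal or disjoint). That is, B ⊆ A is regular precisely when the inclusion matrix is a normalizer matrix. -/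
/-!
A unitary `u` normalizing `B` conjugates each projection `e_j = (diag 1_{f i = j})_i` of `B` to a
projection of `B` with the same trace in every block. If `u` has a nonzero entry at position
`(x, y)` of block `i`, then `u e_{f i y} u*` dominates `e_{f i x}`, and comparing traces in block
`i'` gives `#(f i')⁻¹{f i x} ≤ #(f i')⁻¹{f i y}`. Regularity supplies such a `u` for every
position, so any two columns of the inclusion matrix meeting a common row support coincide; this
is a reformulation of being a normalizer matrix.

Conversely, if those columns coincide, the transposition of `f i x` and `f i y` lifts to a block
permutation matrix normalizing `B` and sending `y` to `x` in block `i`. Multiplying it with the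
matrix unit `E_yy`, half the difference of `1` and a diagonal sign unitary, yields `E_xy`, so the
span of the normalizer contains every matrix unit.
-/

open Matrix Finset

theorem IsStarProjection.one_sub_two_mul_mem_unitary {R : Type*} [Ring R] [StarRing R] {p : R}
    (hp : IsStarProjection p) : 1 - 2 * p ∈ unitary R := by
  have hstar : star (1 - 2 * p) = 1 - 2 * p := by
    rw [star_sub, star_one, star_mul, hp.isSelfAdjoint.star_eq, star_ofNat,
      (Commute.ofNat_right p 2).eq]
  have hsq : (1 - 2 * p) * (1 - 2 * p) = 1 := by
    calc (1 - 2 * p) * (1 - 2 * p) = 1 - 4 * p + 4 * (p * p) := by noncomm_ring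
      _ = 1 := by rw [hp.isIdempotentElem.eq]; noncomm_ring
  exact ⟨by rw [hstar, hsq], by rw [hstar, hsq]⟩

theorem isIdempotentElem_conjugate {R : Type*} [Monoid R] [StarMul R] {e u : R}
    (he : IsIdempotentElem e) (hu : star u * u = 1) : IsIdempotentElem (u * e * star u) := by
  calc u * e * star u * (u * e * star u) = u * (e * (star u * u) * e) * star u := by
        simp only [mul_assoc]
    _ = u * e * star u := by rw [hu, mul_one, he.eq]

theorem Matrix.trace_mul_mul_star {m R : Type*} [Fintype m] [DecidableEq m] [CommSemiring R]
    [Star R] {U : Matrix m m R} (hU : star U * U = 1) (M : Matrix m m R) :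
    trace (U * M * star U) = trace M := by
  rw [trace_mul_comm, ← Matrix.mul_assoc, hU, Matrix.one_mul]

theorem Submonoid.mul_mem_span {R A : Type*} [CommSemiring R] [Semiring A] [Algebra R A]
    (S : Submonoid A) {a b : A} (ha : a ∈ Submodule.span R (S : Set A))
    (hb : b ∈ Submodule.span R (S : Set A)) : a * b ∈ Submodule.span R (S : Set A) := by
  rw [← Submonoid.closure_eq S, ← Algebra.adjoin_eq_span, Subalgebra.mem_toSubmodule] at *
  exact mul_mem ha hb

theorem Submodule.exists_mem_apply_ne_zero_of_span_eq_top {R M N : Type*} [Semiring R]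
    [AddCommMonoid M] [Module R M] [AddCommMonoid N] [Module R N] {s : Set M}
    (hs : Submodule.span R s = ⊤) {φ : M →ₗ[R] N} (hφ : φ ≠ 0) : ∃ u ∈ s, φ u ≠ 0 := by
  by_contra! h
  exact hφ (LinearMap.ext_on hs h)

section Normalizer

variable {A : Type*} [Monoid A] [StarMul A]

def unitaryNormalizer (B : Set A) : Submonoid A where
  carrier := {u | u ∈ unitary A ∧ (fun a => u * a * star u) '' B = B}
  one_mem' := ⟨one_mem _, by simp⟩
  mul_mem' := by
    rintro u v ⟨hu, huB⟩ ⟨hv, hvB⟩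
    refine ⟨mul_mem hu hv, ?_⟩
    have : (fun a => u * v * a * star (u * v)) =
        (fun a => u * a * star u) ∘ (fun a => v * a * star v) := by
      funext a; simp [star_mul, mul_assoc]
    rw [this, Set.image_comp, hvB, huB]

theorem mem_unitaryNormalizer_of_commute {B : Set A} {u : A} (hu : u ∈ unitary A)
    (hcomm : ∀ b ∈ B, Commute u b) : u ∈ unitaryNormalizer B := by
  refine ⟨hu, ?_⟩
  have hfix : ∀ b ∈ B, u * b * star u = b := fun b hb => by
    rw [(hcomm b hb).eq, mul_assoc, Unitary.mul_star_self_of_mem hu, mul_one]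
  rw [Set.image_congr hfix, Set.image_id']

end Normalizer

section Fibers

variable {α κ : Type*} [Fintype α] [DecidableEq κ]

theorem card_fiber_eq_zero_iff (g : α → κ) (j : κ) :
    #{z | g z = j} = 0 ↔ j ∉ Set.range g := by
  simp [Finset.card_eq_zero, Finset.filter_eq_empty_iff]

theorem card_fiber_swap {g : α → κ} {j k : κ} (h : #{z | g z = j} = #{z | g z = k}) (m : κ) :
    #{z | g z = Equiv.swap j k m} = #{z | g z = m} := by
  rcases eq_or_ne m j with rfl | hj
  · rw [Equiv.swap_apply_left, h]
  rcases eq_or_ne m k with rfl | hk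
  · rw [Equiv.swap_apply_right, h]
  · rw [Equiv.swap_apply_of_ne_of_ne hj hk]

theorem exists_perm_comp_eq_of_card_fiber (g : α → κ) (σ : Equiv.Perm κ)
    (h : ∀ m, #{z | g z = σ m} = #{z | g z = m}) :
    ∃ e : Equiv.Perm α, ∀ z, g (e z) = σ (g z) := by
  have hcard : ∀ c, Fintype.card {a // σ (g a) = c} = Fintype.card {b // g b = c} := by
    intro c
    simp only [Fintype.card_subtype, ← Equiv.eq_symm_apply σ]
    rw [← h (σ.symm c), Equiv.apply_symm_apply]
  exact ⟨Equiv.ofFiberEquiv fun c => Fintype.equivOfCardEq (hcard c), Equiv.ofFiberEquiv_map _⟩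

theorem exists_perm_comp_eq_and_apply_eq_of_card_fiber [DecidableEq α] (g : α → κ)
    (σ : Equiv.Perm κ) (h : ∀ m, #{z | g z = σ m} = #{z | g z = m}) {a b : α}
    (hab : g b = σ (g a)) :
    ∃ e : Equiv.Perm α, (∀ z, g (e z) = σ (g z)) ∧ e a = b := by
  obtain ⟨e, he⟩ := exists_perm_comp_eq_of_card_fiber g σ h
  -- `e a` and `b` lie in the same fibre, so swapping them keeps `g ∘ e` unchanged
  refine ⟨e.trans (Equiv.swap (e a) b), fun z => ?_, Equiv.swap_apply_left _ _⟩
  rw [← he z, Equiv.trans_apply, Equiv.swap_apply_def]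
  split_ifs with h₁ h₂
  · rw [h₁, he, hab]
  · rw [h₂, he, hab]
  · rfl

end Fibers

theorem forall_card_fiber_eq_iff {ι κ : Type*} {α : ι → Type*} [∀ i, Fintype (α i)]
    [DecidableEq κ] (f : ∀ i, α i → κ) :
    (∀ i (x y : α i) i', #{z | f i' z = f i x} = #{z | f i' z = f i y}) ↔
      (∀ i, ∀ j ∈ Set.range (f i), ∀ k ∈ Set.range (f i),
        #{x | f i x = j} = #{x | f i x = k}) ∧
      ∀ i i', Set.range (f i) = Set.range (f i') ∨ Set.range (f i) ∩ Set.range (f i') = ∅ := by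
  constructor
  · intro h
    refine ⟨?_, fun i i' => ?_⟩
    · rintro i _ ⟨x, rfl⟩ _ ⟨y, rfl⟩
      exact h i x y i
    have hsub : ∀ p q, (Set.range (f p) ∩ Set.range (f q)).Nonempty →
        Set.range (f p) ⊆ Set.range (f q) := by
      rintro p q ⟨_, ⟨x₀, rfl⟩, hq⟩ _ ⟨x, rfl⟩
      by_contra hx
      rw [← card_fiber_eq_zero_iff, h p x x₀ q, card_fiber_eq_zero_iff] at hx
      exact hx hq
    rcases (Set.range (f i) ∩ Set.range (f i')).eq_empty_or_nonempty with hdisj | hmeet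
    · exact Or.inr hdisj
    · exact Or.inl ((hsub i i' hmeet).antisymm (hsub i' i (Set.inter_comm _ _ ▸ hmeet)))
  · rintro ⟨hrow, hsupp⟩ i x y i'
    rcases hsupp i i' with heq | hdisj
    · exact hrow i' _ (heq ▸ ⟨x, rfl⟩) _ (heq ▸ ⟨y, rfl⟩)
    · have hout : ∀ z, f i z ∉ Set.range (f i') := fun z hz =>
        Set.eq_empty_iff_forall_notMem.1 hdisj _ ⟨⟨z, rfl⟩, hz⟩
      rw [(card_fiber_eq_zero_iff _ _).2 (hout x), (card_fiber_eq_zero_iff _ _).2 (hout y)]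

section FiberDiagonal

variable {ι κ : Type*} {n : ι → Type*} [∀ i, DecidableEq (n i)]

def fiberDiagonal (f : ∀ i, n i → κ) (c : κ → ℂ) : ∀ i, Matrix (n i) (n i) ℂ :=
  fun i => diagonal (c ∘ f i)

variable {f : ∀ i, n i → κ}

theorem fiberDiagonal_apply_self (c : κ → ℂ) (i : ι) (a : n i) :
    fiberDiagonal f c i a a = c (f i a) :=
  diagonal_apply_eq _ _

variable [∀ i, Fintype (n i)]

theorem fiberDiagonal_mul (c d : κ → ℂ) :
    fiberDiagonal f c * fiberDiagonal f d = fiberDiagonal f (c * d) := by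
  funext i
  exact diagonal_mul_diagonal _ _

theorem fiberDiagonal_mul_apply (c : κ → ℂ) (u : ∀ i, Matrix (n i) (n i) ℂ) (i : ι) (a b : n i) :
    (fiberDiagonal f c * u) i a b = c (f i a) * u i a b :=
  diagonal_mul _ _ _ _

theorem mul_fiberDiagonal_apply (c : κ → ℂ) (u : ∀ i, Matrix (n i) (n i) ℂ) (i : ι) (a b : n i) :
    (u * fiberDiagonal f c) i a b = u i a b * c (f i b) :=
  mul_diagonal _ _ _ _

theorem trace_fiberDiagonal (c : κ → ℂ) (i : ι) :
    trace (fiberDiagonal f c i) = ∑ z, c (f i z) :=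
  trace_diagonal _

theorem apply_eq_zero_or_one_of_isIdempotentElem_fiberDiagonal {c : κ → ℂ}
    (hc : IsIdempotentElem (fiberDiagonal f c)) (i : ι) (z : n i) :
    c (f i z) = 0 ∨ c (f i z) = 1 := by
  have hsq : fiberDiagonal f (c * c) = fiberDiagonal f c := (fiberDiagonal_mul c c).symm.trans hc
  have := congr_fun (congr_fun (congr_fun hsq i) z) z
  rw [fiberDiagonal_apply_self, fiberDiagonal_apply_self] at this
  exact IsIdempotentElem.iff_eq_zero_or_one.1 this

theorem card_fiber_le_of_mem_unitaryNormalizer [DecidableEq κ]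
    {u : ∀ i, Matrix (n i) (n i) ℂ} (hu : u ∈ unitaryNormalizer (Set.range (fiberDiagonal f)))
    {i : ι} {x y : n i} (hxy : u i x y ≠ 0) (i' : ι) :
    #{z | f i' z = f i x} ≤ #{z | f i' z = f i y} := by
  set e := fiberDiagonal f (Pi.single (f i y) 1)
  have he : IsIdempotentElem e := by
    rw [IsIdempotentElem, fiberDiagonal_mul, ← Pi.single_mul, one_mul]
  obtain ⟨c, hc⟩ : u * e * star u ∈ Set.range (fiberDiagonal f) :=
    hu.2 ▸ ⟨e, ⟨_, rfl⟩, rfl⟩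
  have hsu : star u * u = 1 := Unitary.star_mul_self_of_mem hu.1
  have hcx : c (f i x) = 1 := by
    have hint : u * e = fiberDiagonal f c * u := by rw [hc, mul_assoc _ (star u), hsu, mul_one]
    have := congr_fun (congr_fun (congr_fun hint i) x) y
    rw [mul_fiberDiagonal_apply, fiberDiagonal_mul_apply, Pi.single_eq_same, mul_one] at this
    exact (mul_eq_right₀ hxy).1 this.symm
  have hbool : ∀ z, c (f i' z) = if c (f i' z) = 1 then 1 else 0 := fun z => by
    rcases apply_eq_zero_or_one_of_isIdempotentElem_fiberDiagonal
      (hc ▸ isIdempotentElem_conjugate he hsu) i' z with h | h <;> simp [h]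
  have htrace : trace (fiberDiagonal f c i') = trace (e i') := by
    rw [hc]
    exact trace_mul_mul_star (congr_fun hsu i') (e i')
  have hcount : #{z | c (f i' z) = 1} = #{z | f i' z = f i y} := by
    rw [trace_fiberDiagonal, trace_fiberDiagonal, Finset.sum_congr rfl fun z _ => hbool z] at htrace
    simpa [Finset.sum_boole, Pi.single_apply] using htrace
  rw [← hcount]
  exact card_le_card fun z => by simp +contextual [hcx]

theorem permMatrix_mem_unitaryNormalizer (σ : Equiv.Perm κ) (E : ∀ i, Equiv.Perm (n i))
    (hE : ∀ i z, f i (E i z) = σ (f i z)) :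
    (fun i => (E i).permMatrix ℂ) ∈ unitaryNormalizer (Set.range (fiberDiagonal f)) := by
  set P : ∀ i, Matrix (n i) (n i) ℂ := fun i => (E i).permMatrix ℂ
  have hstar : star P = fun i => (E i)⁻¹.permMatrix ℂ :=
    funext fun i => conjTranspose_permMatrix _
  have hconj : ∀ c, P * fiberDiagonal f c * star P = fiberDiagonal f (c ∘ σ) := by
    intro c
    rw [hstar]
    funext i
    change (E i).permMatrix ℂ * diagonal (c ∘ f i) * (E i)⁻¹.permMatrix ℂ = diagonal (c ∘ σ ∘ f i)
    rw [PEquiv.toMatrix_toPEquiv_mul, PEquiv.mul_toMatrix_toPEquiv, submatrix_submatrix,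
      Equiv.Perm.inv_def, Equiv.symm_symm, Function.comp_id, Function.id_comp,
      submatrix_diagonal_equiv]
    exact congr_arg diagonal (funext fun z => congr_arg c (hE i z))
  refine ⟨?_, ?_⟩
  · rw [Unitary.mem_iff, hstar]
    constructor <;> funext i <;> simp [P, ← permMatrix_mul]
  · have hsurj : Function.Surjective fun c : κ → ℂ => c ∘ σ :=
      fun c => ⟨c ∘ σ.symm, by simp [Function.comp_assoc]⟩
    rw [← Set.range_comp]
    exact (congr_arg Set.range (funext hconj)).trans (hsurj.range_comp (fiberDiagonal f))

theorem single_single_self_mem_span [DecidableEq ι] (i : ι) (y : n i) :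
    (Pi.single i (single y y 1) : ∀ i, Matrix (n i) (n i) ℂ) ∈
      Submodule.span ℂ (unitaryNormalizer (Set.range (fiberDiagonal f)) : Set _) := by
  set p : ∀ i, Matrix (n i) (n i) ℂ := Pi.single i (single y y (1 : ℂ))
  have hp : IsStarProjection p := by
    refine ⟨?_, ?_⟩
    · rw [IsIdempotentElem, ← Pi.single_mul, single_mul_single_same, mul_one]
    · rw [IsSelfAdjoint, ← Pi.single_star, star_eq_conjTranspose, conjTranspose_single, star_one]
  have hcomm : ∀ b ∈ Set.range (fiberDiagonal f), Commute p b := by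
    rintro _ ⟨c, rfl⟩
    funext j
    rcases eq_or_ne j i with rfl | hj
    · simp only [Pi.mul_apply, p, Pi.single_eq_same, fiberDiagonal, ← diagonal_single,
        diagonal_mul_diagonal, mul_comm]
    · simp [p, hj]
  have hsign : 1 - 2 * p ∈ unitaryNormalizer (Set.range (fiberDiagonal f)) :=
    mem_unitaryNormalizer_of_commute hp.one_sub_two_mul_mem_unitary fun b hb =>
      (Commute.one_left b).sub_left ((Commute.ofNat_left 2 b).mul_left (hcomm b hb))
  have hp_eq : p = (2⁻¹ : ℂ) • (1 - (1 - 2 * p)) := by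
    rw [sub_sub_cancel, two_mul, ← two_smul ℂ, smul_smul, inv_mul_cancel₀ two_ne_zero, one_smul]
  rw [hp_eq]
  exact Submodule.smul_mem _ _ (Submodule.sub_mem _ (Submodule.subset_span (one_mem _))
    (Submodule.subset_span hsign))

theorem single_mem_span_of_card_fiber [DecidableEq ι] [DecidableEq κ]
    (hcard : ∀ i (x y : n i) i', #{z | f i' z = f i x} = #{z | f i' z = f i y})
    (i : ι) (x y : n i) :
    (Pi.single i (single x y 1) : ∀ i, Matrix (n i) (n i) ℂ) ∈
      Submodule.span ℂ (unitaryNormalizer (Set.range (fiberDiagonal f)) : Set _) := by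
  set σ := Equiv.swap (f i x) (f i y)
  have hσ : ∀ j m, #{z | f j z = σ m} = #{z | f j z = m} :=
    fun j => card_fiber_swap (hcard i x y j)
  choose E₀ hE₀ using fun j => exists_perm_comp_eq_of_card_fiber (f j) σ (hσ j)
  obtain ⟨e, he, hex⟩ := exists_perm_comp_eq_and_apply_eq_of_card_fiber (f i) σ (hσ i)
    (Equiv.swap_apply_left _ _).symm
  set E := Function.update E₀ i e
  have hE : ∀ j z, f j (E j z) = σ (f j z) := by
    intro j z
    rcases eq_or_ne j i with rfl | hj
    · simp [E, he]
    · simp [E, hj, hE₀]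
  have hmul : (fun j => (E j).permMatrix ℂ) * Pi.single i (single y y 1) =
      (Pi.single i (single x y 1) : ∀ i, Matrix (n i) (n i) ℂ) := by
    funext j
    rcases eq_or_ne j i with rfl | hj
    · ext a b
      simp [E, PEquiv.toMatrix_toPEquiv_mul, single_apply, ← hex]
    · simp [hj]
  rw [← hmul]
  exact Submonoid.mul_mem_span _
    (Submodule.subset_span (permMatrix_mem_unitaryNormalizer σ E hE))
    (single_single_self_mem_span i y)

theorem eq_top_of_forall_single_mem [Fintype ι] [DecidableEq ι]
    {S : Submodule ℂ (∀ i, Matrix (n i) (n i) ℂ)}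
    (h : ∀ i (x y : n i), Pi.single i (single x y 1) ∈ S) : S = ⊤ := by
  rw [eq_top_iff, ← (Pi.basis fun i => Matrix.stdBasis ℂ (n i) (n i)).span_eq,
    Submodule.span_le]
  rintro _ ⟨⟨i, x, y⟩, rfl⟩
  simpa [stdBasis_eq_single] using h i x y

theorem card_fiber_le_of_span_unitaryNormalizer_eq_top [DecidableEq κ]
    (hspan : Submodule.span ℂ (unitaryNormalizer (Set.range (fiberDiagonal f)) :
      Set (∀ i, Matrix (n i) (n i) ℂ)) = ⊤)
    (i : ι) (x y : n i) (i' : ι) : #{z | f i' z = f i x} ≤ #{z | f i' z = f i y} := by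
  let φ := (entryLinearMap ℂ ℂ x y).comp (LinearMap.proj (R := ℂ)
    (φ := fun i => Matrix (n i) (n i) ℂ) i)
  have hφ : φ ≠ 0 := fun h => one_ne_zero (LinearMap.congr_fun h fun _ => of fun _ _ => 1)
  obtain ⟨u, hu, hxy⟩ := Submodule.exists_mem_apply_ne_zero_of_span_eq_top hspan hφ
  exact card_fiber_le_of_mem_unitaryNormalizer hu hxy i'

theorem span_unitaryNormalizer_eq_top_iff [Fintype ι] [DecidableEq ι] [DecidableEq κ] :
    Submodule.span ℂ (unitaryNormalizer (Set.range (fiberDiagonal f)) :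
      Set (∀ i, Matrix (n i) (n i) ℂ)) = ⊤ ↔
      ∀ i (x y : n i) i', #{z | f i' z = f i x} = #{z | f i' z = f i y} :=
  ⟨fun h i x y i' => (card_fiber_le_of_span_unitaryNormalizer_eq_top h i x y i').antisymm
      (card_fiber_le_of_span_unitaryNormalizer_eq_top h i y x i'),
    fun h => eq_top_of_forall_single_mem (single_mem_span_of_card_fiber h)⟩

end FiberDiagonal

theorem regular_iff_normalizerMatrix_general (s r : ℕ)
    (n : Fin s → ℕ)
    (f : (i : Fin s) → Fin (n i) → Fin r)
    (B : Set (∀ i, Matrix (Fin (n i)) (Fin (n i)) ℂ))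
    (hB : B = {a | ∃ c : Fin r → ℂ,
      a = fun i => Matrix.diagonal (c ∘ f i)}) :
    Submodule.span ℂ
      {u : ∀ i, Matrix (Fin (n i)) (Fin (n i)) ℂ |
        u ∈ unitary (∀ i, Matrix (Fin (n i)) (Fin (n i)) ℂ) ∧
        (fun a => u * a * star u) '' B = B} = ⊤ ↔
    ((∀ i : Fin s, ∀ j ∈ Set.range (f i), ∀ k ∈ Set.range (f i),
        (Finset.univ.filter fun x => f i x = j).card =
        (Finset.univ.filter fun x => f i x = k).card) ∧
     (∀ i i' : Fin s,
        Set.range (f i) = Set.range (f i') ∨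
        Set.range (f i) ∩ Set.range (f i') = ∅)) := by
  obtain rfl : B = Set.range (fiberDiagonal f) :=
    hB.trans (Set.ext fun _ => exists_congr fun _ => eq_comm)
  exact span_unitaryNormalizer_eq_top_iff.trans (forall_card_fiber_eq_iff f)

/-- the commutative inclusion `ℂ^r ⊆ ⊕_i M_{n i}(ℂ)` determined
by the family `f` is regular if and only if its inclusion matrix is a
normalizer matrix: all nonzero entries in each row are equal, and the row
supports are pairwise equal or disjoint. -/
theorem regular_iff_normalizerMatrix (s r : ℕ) (hs : 1 ≤ s) (hr : 1 ≤ r)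
    (n : Fin s → ℕ) (hn : ∀ i, 1 ≤ n i)
    (f : (i : Fin s) → Fin (n i) → Fin r)
    (hcover : ∀ j : Fin r, ∃ i : Fin s, j ∈ Set.range (f i))
    (B : Set (∀ i, Matrix (Fin (n i)) (Fin (n i)) ℂ))
    (hB : B = {a | ∃ c : Fin r → ℂ,
      a = fun i => Matrix.diagonal (c ∘ f i)}) :
    Submodule.span ℂ
      {u : ∀ i, Matrix (Fin (n i)) (Fin (n i)) ℂ |
        u ∈ unitary (∀ i, Matrix (Fin (n i)) (Fin (n i)) ℂ) ∧
        (fun a => u * a * star u) '' B = B} = ⊤ ↔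
    ((∀ i : Fin s, ∀ j ∈ Set.range (f i), ∀ k ∈ Set.range (f i),
        (Finset.univ.filter fun x => f i x = j).card =
        (Finset.univ.filter fun x => f i x = k).card) ∧
     (∀ i i' : Fin s,
        Set.range (f i) = Set.range (f i') ∨
        Set.range (f i) ∩ Set.range (f i') = ∅)) :=
  regular_iff_normalizerMatrix_general s r n f B hB
end

section
/- Let A : Fin s → Fin r → ℕ be a normalizer matrix. Then A has depth two: there exists q : ℕ such that for all i : Fin s and j : Fin r, (A * Aᵀ * A) i j ≤ q * (A i j), where the products are ordinary matrix products over ℕ. Moreover q may be chosen to be the maximum over rows i of |Y i| · Σ_{k : Y k = Y i} (c k)², where Y i is the support of row i and c k is the common nonzero value of the entries in row k. -/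
open Matrix Finset

/-!
Write `Y i` for the support of row `i`. The entry `(A Aᵀ) i k = ∑ₘ A i m * A k m` vanishes when
`Y i` and `Y k` are disjoint and equals `|Y i| · c i · c k` when `Y i = Y k`. Hence
`(A Aᵀ A) i j = ∑_{Y k = Y i} |Y i| · c i · c k · A k j`, and since `A k j` vanishes exactly when
`A i j` does for such `k`, this is `A i j · |Y i| · ∑_{Y k = Y i} (c k)²`: depth two holds with
equality row by row, and the maximum over the rows is a uniform constant.
-/

namespace Matrix

variable {m n R : Type*} [Fintype n]

theorem mul_transpose_apply_eq_zero_of_support_disjoint [NonUnitalNonAssocSemiring R]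
    (A : Matrix m n R) {i k : m}
    (h : {j : n | A i j ≠ 0} ∩ {j : n | A k j ≠ 0} = ∅) :
    (A * Aᵀ) i k = 0 := by
  refine sum_eq_zero fun j _ => by_contra fun hne => ?_
  have hj : j ∈ {j : n | A i j ≠ 0} ∩ {j : n | A k j ≠ 0} :=
    ⟨left_ne_zero_of_mul hne, right_ne_zero_of_mul hne⟩
  simp [h] at hj

theorem mul_transpose_apply_of_support_eq [NonAssocSemiring R] [DecidableEq R]
    (A : Matrix m n R) (c : m → R) (hc : ∀ i j, A i j ≠ 0 → A i j = c i) {i k : m}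
    (h : ∀ j, A k j ≠ 0 ↔ A i j ≠ 0) :
    (A * Aᵀ) i k = #{j | A i j ≠ 0} * (c i * c k) := by
  rw [mul_apply, ← Finset.sum_filter_of_ne (p := fun j => A i j ≠ 0) fun j _ hj =>
    left_ne_zero_of_mul hj, ← nsmul_eq_mul, ← Finset.sum_const]
  refine sum_congr rfl fun j hj => ?_
  have hij : A i j ≠ 0 := (mem_filter.mp hj).2
  rw [transpose_apply, hc i j hij, hc k j ((h j).mpr hij)]

variable [Fintype m]

/-- `Fintype.decidableForallFintype` is given explicitly: instance search does not see through
`Matrix` to decide the predicate. -/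
def rowsWithSameSupport [Zero R] [DecidableEq R] (A : Matrix m n R) (i : m) : Finset m :=
  @Finset.filter _ (fun k => ∀ j, (A k j ≠ 0 ↔ A i j ≠ 0))
    (fun _ => Fintype.decidableForallFintype) univ

variable [CommSemiring R] [DecidableEq R]

theorem mul_transpose_mul_apply_of_normalizer (A : Matrix m n R) (c : m → R)
    (hc : ∀ i j, A i j ≠ 0 → A i j = c i)
    (hsupp : ∀ i k : m,
      {j : n | A i j ≠ 0} = {j : n | A k j ≠ 0} ∨
      {j : n | A i j ≠ 0} ∩ {j : n | A k j ≠ 0} = ∅)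
    (i : m) (j : n) :
    (A * Aᵀ * A) i j =
      A i j * (#{j | A i j ≠ 0} * ∑ k ∈ A.rowsWithSameSupport i, c k ^ 2) := by
  have h_off_class : ∀ k, ¬(∀ j, (A k j ≠ 0 ↔ A i j ≠ 0)) → (A * Aᵀ) i k = 0 := by
    intro k hk
    rcases hsupp i k with heq | hdisj
    · exact absurd (fun j' => (Set.ext_iff.mp heq j').symm) hk
    · exact mul_transpose_apply_eq_zero_of_support_disjoint A hdisj
  unfold rowsWithSameSupport
  rw [mul_apply, sum_filter, mul_sum, mul_sum]
  refine sum_congr rfl fun k _ => ?_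
  split_ifs with hsame
  · rw [mul_transpose_apply_of_support_eq A c hc hsame]
    have hswap : c i * A k j = A i j * c k := by
      by_cases hij : A i j = 0
      · have hkj : A k j = 0 := not_ne_iff.mp fun hkj => (hsame j).mp hkj hij
        rw [hij, hkj, mul_zero, zero_mul]
      · rw [hc i j hij, hc k j ((hsame j).mpr hij), mul_comm]
    calc _ = #{j | A i j ≠ 0} * c k * (c i * A k j) := by ring
      _ = _ := by rw [hswap]; ring
  · rw [h_off_class k hsame, zero_mul, mul_zero, mul_zero]

end Matrix

theorem normalizerMatrix_depth_two_general {s r : ℕ} (A : Matrix (Fin s) (Fin r) ℕ)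
    (c : Fin s → ℕ)
    (hc : ∀ i j, A i j ≠ 0 → A i j = c i)
    (hsupp : ∀ i k : Fin s,
      {j : Fin r | A i j ≠ 0} = {j : Fin r | A k j ≠ 0} ∨
      {j : Fin r | A i j ≠ 0} ∩ {j : Fin r | A k j ≠ 0} = ∅) :
    ∃ q : ℕ,
      (∀ (i : Fin s) (j : Fin r), (A * Aᵀ * A) i j ≤ q * A i j) ∧
      q = Finset.univ.sup (fun i : Fin s =>
        (Finset.univ.filter fun j => A i j ≠ 0).card *
        ∑ k ∈ @Finset.filter _
            (fun k : Fin s => ∀ j, (A k j ≠ 0 ↔ A i j ≠ 0))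
            (fun _ => Fintype.decidableForallFintype) Finset.univ,
          (c k) ^ 2) := by
  refine ⟨_, fun i j => ?_, rfl⟩
  rw [mul_transpose_mul_apply_of_normalizer A c hc hsupp i j, mul_comm]
  exact Nat.mul_le_mul_right _ (Finset.le_sup (f := fun i : Fin s =>
    #{j | A i j ≠ 0} * ∑ k ∈ A.rowsWithSameSupport i, c k ^ 2) (Finset.mem_univ i))

/-- a normalizer matrix has depth two, `A Aᵀ A ≤ q A` entrywise,
and `q` may be chosen to be the maximum over rows `i` of
`|Y i| · Σ_{k : Y k = Y i} (c k)²`, where `Y i` is the support of row `i` and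
`c k` is the common nonzero value of the entries of row `k`. -/
theorem normalizerMatrix_depth_two {s r : ℕ} (A : Matrix (Fin s) (Fin r) ℕ)
    (c : Fin s → ℕ)
    (hirr : (∀ i, ∃ j, A i j ≠ 0) ∧ (∀ j, ∃ i, A i j ≠ 0))
    (hc : ∀ i j, A i j ≠ 0 → A i j = c i)
    (hsupp : ∀ i k : Fin s,
      {j : Fin r | A i j ≠ 0} = {j : Fin r | A k j ≠ 0} ∨
      {j : Fin r | A i j ≠ 0} ∩ {j : Fin r | A k j ≠ 0} = ∅) :
    ∃ q : ℕ,
      (∀ (i : Fin s) (j : Fin r), (A * Aᵀ * A) i j ≤ q * A i j) ∧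
      q = Finset.univ.sup (fun i : Fin s =>
        (Finset.univ.filter fun j => A i j ≠ 0).card *
        ∑ k ∈ @Finset.filter _
            (fun k : Fin s => ∀ j, (A k j ≠ 0 ↔ A i j ≠ 0))
            (fun _ => Fintype.decidableForallFintype) Finset.univ,
          (c k) ^ 2) :=
  normalizerMatrix_depth_two_general A c hc hsupp
end

section
/- Let B₁ be a unital star-subalgebra of A₁ := Matrix (Fin n) (Fin n) ℂ and B₂ a unital star-subalgebra of A₂ := Matrix (Fin m) (Fin m) ℂ, with conditional expectations E₁, E₂ onto B₁, B₂ (linear, range in B_i, fixing B_i, with E_i(b x c) = b E_i(x) c for b, c ∈ B_i). Let W : Fin d₁ → A₁ and V : Fin d₂ → A₂ be unitary orthonormal bases for (B₁ ⊆ A₁, E₁) and (B₂ ⊆ A₂, E₂), each contained in the respective normalizer. Let A := Matrix (Fin n × Fin m) (Fin n × Fin m) ℂ, let B ⊆ A be the ℂ-linear span of the Kronecker products {b₁ ⊗ₖ b₂ : b₁ ∈ B₁, b₂ ∈ B₂} (a unital star-subalgebra realizing B₁ ⊗ B₂ ⊆ A₁ ⊗ A₂), and let E : A →ₗ[ℂ]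 A be a linear map satisfying E (x ⊗ₖ y) = (E₁ x) ⊗ₖ (E₂ y) for all x ∈ A₁, y ∈ A₂ (which determines E uniquely). Then the d₁·d₂ matrices (W j) ⊗ₖ (V k), for (j,k) : Fin d₁ × Fin d₂, form a unitary orthonormal basis for (B ⊆ A, E) contained in the normalizer of B: each (W j) ⊗ₖ (V k) is unitary and normalizes B, E (((W j) ⊗ₖ (V k))ᴴ * ((W j') ⊗ₖ (V k'))) = (if (j,k) = (j',k') then 1 else 0), and Z = Σ_{j,k} ((W j) ⊗ₖ (V k)) * E (((W j) ⊗ₖ (V k))ᴴ * Z) for every Z ∈ A. -/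
/-!
Since `(a ⊗ₖ b)ᴴ * (c ⊗ₖ d) = (aᴴ * c) ⊗ₖ (bᴴ * d)` and `E` acts factorwise, unitarity and
orthonormality of the `W j ⊗ₖ V k` reduce to those of the factors. Both sides of the basis
expansion are linear in `Z`, and on an elementary tensor `x ⊗ₖ y` it is the Kronecker product of
the expansions of `x` and `y`; elementary tensors span. Conjugation by `U ⊗ₖ V` maps the generating
set `B₁ ⊗ₖ B₂` of `B` onto `(U B₁ Uᴴ) ⊗ₖ (V B₂ Vᴴ)`, which is the generating set again.
-/

open Matrix Kronecker

theorem Set.image_mul_mul_span {R A : Type*} [CommSemiring R] [Semiring A] [Algebra R A]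
    (a b : A) (s : Set A) :
    (fun z => a * z * b) '' (Submodule.span R s : Set A) =
      Submodule.span R ((fun z => a * z * b) '' s) := by
  let f := LinearMap.mulRight R b ∘ₗ LinearMap.mulLeft R a
  change f '' _ = Submodule.span R (f '' s)
  rw [← Submodule.map_coe, Submodule.map_span]

namespace Matrix

variable {R l m n p ι κ : Type*}

theorem sum_kronecker_sum [CommSemiring R] (s : Finset ι) (t : Finset κ)
    (f : ι → Matrix l m R) (g : κ → Matrix n p R) :
    (∑ i ∈ s, f i) ⊗ₖ (∑ j ∈ t, g j) = ∑ i ∈ s, ∑ j ∈ t, f i ⊗ₖ g j := by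
  ext ⟨i₁, i₂⟩ ⟨j₁, j₂⟩
  simp only [kronecker_apply, sum_apply, Finset.sum_mul_sum]

theorem ite_kronecker_ite [MulZeroOneClass R] [DecidableEq l] [DecidableEq n]
    (P Q : Prop) [Decidable P] [Decidable Q] :
    (if P then 1 else 0 : Matrix l l R) ⊗ₖ (if Q then 1 else 0 : Matrix n n R) =
      if P ∧ Q then 1 else 0 := by
  split_ifs <;> simp_all

theorem linearMap_ext_kronecker [CommSemiring R] [Fintype l] [Fintype m] [Fintype n] [Fintype p]
    [DecidableEq l] [DecidableEq m] [DecidableEq n] [DecidableEq p]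
    {M : Type*} [AddCommMonoid M] [Module R M] {f g : Matrix (l × n) (m × p) R →ₗ[R] M}
    (h : ∀ x y, f (x ⊗ₖ y) = g (x ⊗ₖ y)) : f = g := by
  have : f ∘ₗ (kroneckerLinearEquiv l m n p R).toLinearMap =
      g ∘ₗ (kroneckerLinearEquiv l m n p R).toLinearMap :=
    TensorProduct.ext' h
  simpa using congrArg (· ∘ₗ (kroneckerLinearEquiv l m n p R).symm.toLinearMap) this

theorem image_conj_image2_kronecker [CommSemiring R] [StarRing R] [Fintype l] [Fintype n]
    (U : Matrix l l R) (V : Matrix n n R) (S : Set (Matrix l l R)) (T : Set (Matrix n n R)) :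
    (fun z => (U ⊗ₖ V) * z * (U ⊗ₖ V)ᴴ) '' Set.image2 (· ⊗ₖ ·) S T =
      Set.image2 (· ⊗ₖ ·) ((fun x => U * x * Uᴴ) '' S) ((fun y => V * y * Vᴴ) '' T) :=
  Set.image_image2_distrib fun x y => by
    rw [conjTranspose_kronecker, ← mul_kronecker_mul, ← mul_kronecker_mul]

section TensorBasis

variable [CommSemiring R] [StarRing R] [Fintype l] [DecidableEq l] [Fintype n] [DecidableEq n]
  {E₁ : Matrix l l R →ₗ[R] Matrix l l R} {E₂ : Matrix n n R →ₗ[R] Matrix n n R}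
  {E : Matrix (l × n) (l × n) R →ₗ[R] Matrix (l × n) (l × n) R}
  {W : ι → Matrix l l R} {V : κ → Matrix n n R}

theorem map_conjTranspose_kronecker_mul_kronecker [DecidableEq ι] [DecidableEq κ]
    (hE : ∀ x y, E (x ⊗ₖ y) = E₁ x ⊗ₖ E₂ y)
    (hW : ∀ j j', E₁ ((W j)ᴴ * W j') = if j = j' then 1 else 0)
    (hV : ∀ k k', E₂ ((V k)ᴴ * V k') = if k = k' then 1 else 0) (j j' : ι) (k k' : κ) :
    E ((W j ⊗ₖ V k)ᴴ * (W j' ⊗ₖ V k')) = if (j, k) = (j', k') then 1 else 0 := by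
  rw [conjTranspose_kronecker, ← mul_kronecker_mul, hE, hW, hV, ite_kronecker_ite]
  simp only [Prod.mk.injEq]

theorem eq_sum_kronecker_mul_map_conjTranspose_kronecker_mul [Fintype ι] [Fintype κ]
    (hE : ∀ x y, E (x ⊗ₖ y) = E₁ x ⊗ₖ E₂ y)
    (hW : ∀ X, X = ∑ j, W j * E₁ ((W j)ᴴ * X)) (hV : ∀ Y, Y = ∑ k, V k * E₂ ((V k)ᴴ * Y))
    (Z : Matrix (l × n) (l × n) R) :
    Z = ∑ j, ∑ k, (W j ⊗ₖ V k) * E ((W j ⊗ₖ V k)ᴴ * Z) := by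
  suffices h : LinearMap.id = ∑ j, ∑ k,
      LinearMap.mulLeft R (W j ⊗ₖ V k) ∘ₗ E ∘ₗ LinearMap.mulLeft R (W j ⊗ₖ V k)ᴴ by
    simpa using LinearMap.congr_fun h Z
  refine linearMap_ext_kronecker fun x y => ?_
  have hterm : ∀ j k, (W j ⊗ₖ V k) * E ((W j ⊗ₖ V k)ᴴ * (x ⊗ₖ y)) =
      (W j * E₁ ((W j)ᴴ * x)) ⊗ₖ (V k * E₂ ((V k)ᴴ * y)) := fun j k => by
    rw [conjTranspose_kronecker, ← mul_kronecker_mul, hE, ← mul_kronecker_mul]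
  simp only [LinearMap.id_apply, LinearMap.sum_apply, LinearMap.comp_apply,
    LinearMap.mulLeft_apply, hterm]
  rw [← sum_kronecker_sum, ← hW, ← hV]

end TensorBasis

end Matrix

theorem tensor_uonb_general (n m : ℕ)
    (B₁ : StarSubalgebra ℂ (Matrix (Fin n) (Fin n) ℂ))
    (B₂ : StarSubalgebra ℂ (Matrix (Fin m) (Fin m) ℂ))
    (E₁ : Matrix (Fin n) (Fin n) ℂ →ₗ[ℂ] Matrix (Fin n) (Fin n) ℂ)
    (E₂ : Matrix (Fin m) (Fin m) ℂ →ₗ[ℂ] Matrix (Fin m) (Fin m) ℂ)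
    (d₁ d₂ : ℕ)
    (W : Fin d₁ → Matrix (Fin n) (Fin n) ℂ)
    (V : Fin d₂ → Matrix (Fin m) (Fin m) ℂ)
    (hWu : ∀ j, W j ∈ unitary (Matrix (Fin n) (Fin n) ℂ))
    (hWnorm : ∀ j, (fun x => W j * x * (W j)ᴴ) ''
        (B₁ : Set (Matrix (Fin n) (Fin n) ℂ)) = B₁)
    (hWortho : ∀ j k, E₁ ((W j)ᴴ * W k) = if j = k then 1 else 0)
    (hWbasis : ∀ X : Matrix (Fin n) (Fin n) ℂ,
        X = ∑ j, W j * E₁ ((W j)ᴴ * X))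
    (hVu : ∀ j, V j ∈ unitary (Matrix (Fin m) (Fin m) ℂ))
    (hVnorm : ∀ j, (fun x => V j * x * (V j)ᴴ) ''
        (B₂ : Set (Matrix (Fin m) (Fin m) ℂ)) = B₂)
    (hVortho : ∀ j k, E₂ ((V j)ᴴ * V k) = if j = k then 1 else 0)
    (hVbasis : ∀ Y : Matrix (Fin m) (Fin m) ℂ,
        Y = ∑ j, V j * E₂ ((V j)ᴴ * Y))
    (B : Submodule ℂ (Matrix (Fin n × Fin m) (Fin n × Fin m) ℂ))
    (hBdef : B = Submodule.span ℂ
      {z : Matrix (Fin n × Fin m) (Fin n × Fin m) ℂ |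
        ∃ b₁ ∈ B₁, ∃ b₂ ∈ B₂, z = b₁ ⊗ₖ b₂})
    (E : Matrix (Fin n × Fin m) (Fin n × Fin m) ℂ →ₗ[ℂ]
        Matrix (Fin n × Fin m) (Fin n × Fin m) ℂ)
    (hE : ∀ (x : Matrix (Fin n) (Fin n) ℂ) (y : Matrix (Fin m) (Fin m) ℂ),
        E (x ⊗ₖ y) = (E₁ x) ⊗ₖ (E₂ y)) :
    (∀ (j : Fin d₁) (k : Fin d₂),
        (W j) ⊗ₖ (V k) ∈ unitary (Matrix (Fin n × Fin m) (Fin n × Fin m) ℂ)) ∧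
    (∀ (j : Fin d₁) (k : Fin d₂),
        (fun z => ((W j) ⊗ₖ (V k)) * z * ((W j) ⊗ₖ (V k))ᴴ) ''
          (B : Set (Matrix (Fin n × Fin m) (Fin n × Fin m) ℂ)) = B) ∧
    (∀ (j j' : Fin d₁) (k k' : Fin d₂),
        E (((W j) ⊗ₖ (V k))ᴴ * ((W j') ⊗ₖ (V k'))) =
          if (j, k) = (j', k') then 1 else 0) ∧
    (∀ Z : Matrix (Fin n × Fin m) (Fin n × Fin m) ℂ,
        Z = ∑ j, ∑ k,
          ((W j) ⊗ₖ (V k)) * E (((W j) ⊗ₖ (V k))ᴴ * Z)) := by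
  have hgen : {z : Matrix (Fin n × Fin m) (Fin n × Fin m) ℂ |
      ∃ b₁ ∈ B₁, ∃ b₂ ∈ B₂, z = b₁ ⊗ₖ b₂} = Set.image2 (· ⊗ₖ ·) (B₁ : Set _) (B₂ : Set _) := by
    ext z
    simp only [Set.mem_ofPred_eq, Set.mem_image2, SetLike.mem_coe, eq_comm]
  refine ⟨fun j k => kronecker_mem_unitary (hWu j) (hVu k), fun j k => ?_,
    map_conjTranspose_kronecker_mul_kronecker hE hWortho hVortho,
    eq_sum_kronecker_mul_map_conjTranspose_kronecker_mul hE hWbasis hVbasis⟩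
  rw [hBdef, hgen, Set.image_mul_mul_span, image_conj_image2_kronecker, hWnorm, hVnorm]

/-- the Kronecker products of two unitary orthonormal bases,
each contained in the respective normalizer, form a unitary orthonormal basis
for the tensor-product inclusion, contained in the normalizer of
`B = span {b₁ ⊗ₖ b₂}`. -/
theorem tensor_uonb (n m : ℕ)
    (B₁ : StarSubalgebra ℂ (Matrix (Fin n) (Fin n) ℂ))
    (B₂ : StarSubalgebra ℂ (Matrix (Fin m) (Fin m) ℂ))
    (E₁ : Matrix (Fin n) (Fin n) ℂ →ₗ[ℂ] Matrix (Fin n) (Fin n) ℂ)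
    (E₂ : Matrix (Fin m) (Fin m) ℂ →ₗ[ℂ] Matrix (Fin m) (Fin m) ℂ)
    (hrange₁ : ∀ x, E₁ x ∈ B₁) (hfix₁ : ∀ b ∈ B₁, E₁ b = b)
    (hbimod₁ : ∀ b ∈ B₁, ∀ c ∈ B₁, ∀ x, E₁ (b * x * c) = b * E₁ x * c)
    (hrange₂ : ∀ x, E₂ x ∈ B₂) (hfix₂ : ∀ b ∈ B₂, E₂ b = b)
    (hbimod₂ : ∀ b ∈ B₂, ∀ c ∈ B₂, ∀ x, E₂ (b * x * c) = b * E₂ x * c)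
    (d₁ d₂ : ℕ)
    (W : Fin d₁ → Matrix (Fin n) (Fin n) ℂ)
    (V : Fin d₂ → Matrix (Fin m) (Fin m) ℂ)
    (hWu : ∀ j, W j ∈ unitary (Matrix (Fin n) (Fin n) ℂ))
    (hWnorm : ∀ j, (fun x => W j * x * (W j)ᴴ) ''
        (B₁ : Set (Matrix (Fin n) (Fin n) ℂ)) = B₁)
    (hWortho : ∀ j k, E₁ ((W j)ᴴ * W k) = if j = k then 1 else 0)
    (hWbasis : ∀ X : Matrix (Fin n) (Fin n) ℂ,
        X = ∑ j, W j * E₁ ((W j)ᴴ * X))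
    (hVu : ∀ j, V j ∈ unitary (Matrix (Fin m) (Fin m) ℂ))
    (hVnorm : ∀ j, (fun x => V j * x * (V j)ᴴ) ''
        (B₂ : Set (Matrix (Fin m) (Fin m) ℂ)) = B₂)
    (hVortho : ∀ j k, E₂ ((V j)ᴴ * V k) = if j = k then 1 else 0)
    (hVbasis : ∀ Y : Matrix (Fin m) (Fin m) ℂ,
        Y = ∑ j, V j * E₂ ((V j)ᴴ * Y))
    (B : Submodule ℂ (Matrix (Fin n × Fin m) (Fin n × Fin m) ℂ))
    (hBdef : B = Submodule.span ℂ
      {z : Matrix (Fin n × Fin m) (Fin n × Fin m) ℂ |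
        ∃ b₁ ∈ B₁, ∃ b₂ ∈ B₂, z = b₁ ⊗ₖ b₂})
    (E : Matrix (Fin n × Fin m) (Fin n × Fin m) ℂ →ₗ[ℂ]
        Matrix (Fin n × Fin m) (Fin n × Fin m) ℂ)
    (hE : ∀ (x : Matrix (Fin n) (Fin n) ℂ) (y : Matrix (Fin m) (Fin m) ℂ),
        E (x ⊗ₖ y) = (E₁ x) ⊗ₖ (E₂ y)) :
    (∀ (j : Fin d₁) (k : Fin d₂),
        (W j) ⊗ₖ (V k) ∈ unitary (Matrix (Fin n × Fin m) (Fin n × Fin m) ℂ)) ∧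
    (∀ (j : Fin d₁) (k : Fin d₂),
        (fun z => ((W j) ⊗ₖ (V k)) * z * ((W j) ⊗ₖ (V k))ᴴ) ''
          (B : Set (Matrix (Fin n × Fin m) (Fin n × Fin m) ℂ)) = B) ∧
    (∀ (j j' : Fin d₁) (k k' : Fin d₂),
        E (((W j) ⊗ₖ (V k))ᴴ * ((W j') ⊗ₖ (V k'))) =
          if (j, k) = (j', k') then 1 else 0) ∧
    (∀ Z : Matrix (Fin n × Fin m) (Fin n × Fin m) ℂ,
        Z = ∑ j, ∑ k,
          ((W j) ⊗ₖ (V k)) * E (((W j) ⊗ₖ (V k))ᴴ * Z)) :=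
  tensor_uonb_general n m B₁ B₂ E₁ E₂ d₁ d₂ W V hWu hWnorm hWortho hWbasis hVu hVnorm hVortho
    hVbasis B hBdef E hE
end
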